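/- arXiv:1704.00520 — 3 statements merged into one kernel-verified Lean document; each statement's English description precedes it below -/
import Mathlib

section
/- Let σ > 0, v > 0 and ε, m ∈ ℝ. Let μ be the bivariate Gaussian probability measure on ℝ² with mean vector (m, m) and covariance matrix [[σ² + v², v²], [v², σ² + v²]] (which is positive definite). Then ∫_ℝ Φ((ε − f)/σ)² · N(f | m, v²) df = μ({(z₁, z₂) ∈ ℝ² : z₁ ≤ ε and z₂ ≤ ε}). -/
open MeasureTheory Real

/-- Standard normal cumulative distribution function. -/
noncomputable def Phi (x : ℝ) : ℝ :=
  ∫ t in Set.Iic x, Real.exp (-t ^ 2 / 2) / Real.sqrt (2 * Real.pi)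

/-- Gaussian probability density with mean `m` and standard deviation `v`. -/
noncomputable def gaussPdf (m v x : ℝ) : ℝ :=
  Real.exp (-(x - m) ^ 2 / (2 * v ^ 2)) / Real.sqrt (2 * Real.pi * v ^ 2)

/-- Owen's t-function. -/
noncomputable def OwenT (h a : ℝ) : ℝ :=
  (1 / (2 * Real.pi)) * ∫ x in (0:ℝ)..a, Real.exp (-h ^ 2 * (1 + x ^ 2) / 2) / (1 + x ^ 2)

/-- Density of the bivariate Gaussian with mean `(m₁, m₂)` and covariance matrix
`[[A, B], [B, A]]` (assumed positive definite, i.e. `A > |B|`). -/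
noncomputable def biGaussDensity (m₁ m₂ A B : ℝ) (z : ℝ × ℝ) : ℝ :=
  Real.exp (-(A * (z.1 - m₁) ^ 2 - 2 * B * (z.1 - m₁) * (z.2 - m₂) + A * (z.2 - m₂) ^ 2) /
      (2 * (A ^ 2 - B ^ 2))) / (2 * Real.pi * Real.sqrt (A ^ 2 - B ^ 2))


/-! The two noisy observations `zᵢ = f + σ Zᵢ` of a latent `f ~ N(m, v²)` are conditionally
independent given `f`, and `Φ((ε - f) / σ)` is the conditional probability that one of them is at
most `ε`. Hence, by Tonelli, the left-hand side is the integral over the quadrant of the mixture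
density `∫ N(z₁ | f, σ²) N(z₂ | f, σ²) N(f | m, v²) df`, and completing the square in `f` shows
that this mixture is the bivariate Gaussian density. -/

open ProbabilityTheory Set

lemma NNReal.mk_sq_ne_zero {v : ℝ} (hv : v ≠ 0) : NNReal.mk (v ^ 2) (sq_nonneg v) ≠ 0 := by
  rw [Ne, ← NNReal.coe_inj, NNReal.coe_mk, NNReal.coe_zero]
  positivity

lemma gaussPdf_eq_gaussianPDFReal (m v x : ℝ) :
    gaussPdf m v x = gaussianPDFReal m (.mk (v ^ 2) (sq_nonneg v)) x := by
  rw [gaussPdf, gaussianPDFReal, NNReal.coe_mk]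
  exact div_eq_inv_mul _ _

lemma gaussPdf_nonneg (m v x : ℝ) : 0 ≤ gaussPdf m v x :=
  gaussPdf_eq_gaussianPDFReal m v x ▸ gaussianPDFReal_nonneg _ _ x

lemma gaussPdf_of_pos {v : ℝ} (hv : 0 < v) (m x : ℝ) :
    gaussPdf m v x = exp (-(x - m) ^ 2 / (2 * v ^ 2)) / (v * √(2 * π)) := by
  rw [gaussPdf, mul_comm (2 * π), sqrt_mul (sq_nonneg v), sqrt_sq hv.le]

@[fun_prop]
lemma measurable_gaussPdf {α : Type*} [MeasurableSpace α] {f g : α → ℝ} (v : ℝ)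
    (hf : Measurable f) (hg : Measurable g) : Measurable fun a ↦ gaussPdf (f a) v (g a) := by
  unfold gaussPdf
  fun_prop

lemma lintegral_ofReal_gaussPdf (m : ℝ) {v : ℝ} (hv : v ≠ 0) :
    ∫⁻ x, ENNReal.ofReal (gaussPdf m v x) = 1 := by
  simp_rw [gaussPdf_eq_gaussianPDFReal]
  exact lintegral_gaussianPDF_eq_one m (NNReal.mk_sq_ne_zero hv)

lemma Phi_eq_cdf_gaussianReal : Phi = cdf (gaussianReal 0 1) := by
  ext x
  rw [cdf_eq_real, measureReal_def, gaussianReal_apply_eq_integral _ one_ne_zero,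
    ENNReal.toReal_ofReal (setIntegral_nonneg measurableSet_Iic fun t _ ↦
      gaussianPDFReal_nonneg _ _ t), Phi]
  congr with t
  simp [gaussianPDFReal, div_eq_inv_mul]

lemma Phi_nonneg (x : ℝ) : 0 ≤ Phi x :=
  Phi_eq_cdf_gaussianReal ▸ cdf_nonneg _ x

@[fun_prop]
lemma measurable_Phi : Measurable Phi :=
  Phi_eq_cdf_gaussianReal ▸ (monotone_cdf _).measurable

lemma gaussianReal_Iic_eq_gaussianReal_zero_one {σ : ℝ} (hσ : 0 < σ) (f ε : ℝ) :
    gaussianReal f (.mk (σ ^ 2) (sq_nonneg σ)) (Iic ε) =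
      gaussianReal 0 1 (Iic ((ε - f) / σ)) := by
  have hmap : gaussianReal f (.mk (σ ^ 2) (sq_nonneg σ)) =
      ((gaussianReal 0 1).map (σ * ·)).map (· + f) := by
    rw [gaussianReal_map_const_mul, gaussianReal_map_add_const]
    simp
  rw [hmap, Measure.map_map (by fun_prop) (by fun_prop),
    Measure.map_apply (by fun_prop) measurableSet_Iic]
  congr 1
  ext x
  simp only [mem_preimage, Function.comp_apply, mem_Iic, le_div_iff₀ hσ]
  constructor <;> intro <;> linarith

lemma lintegral_Iic_gaussPdf {σ : ℝ} (hσ : 0 < σ) (f ε : ℝ) :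
    ∫⁻ z in Iic ε, ENNReal.ofReal (gaussPdf f σ z) =
      ENNReal.ofReal (Phi ((ε - f) / σ)) := by
  simp_rw [gaussPdf_eq_gaussianPDFReal]
  rw [Phi_eq_cdf_gaussianReal, ofReal_cdf, ← gaussianReal_Iic_eq_gaussianReal_zero_one hσ,
    gaussianReal_apply _ (NNReal.mk_sq_ne_zero hσ.ne')]
  rfl

lemma lintegral_Iic_prod_Iic_gaussPdf_mul_gaussPdf {σ : ℝ} (hσ : 0 < σ) (f ε : ℝ) :
    ∫⁻ z, ENNReal.ofReal (gaussPdf f σ z.1) * ENNReal.ofReal (gaussPdf f σ z.2)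
        ∂(volume.restrict (Iic ε)).prod (volume.restrict (Iic ε)) =
      ENNReal.ofReal (Phi ((ε - f) / σ) ^ 2) := by
  have hg : Measurable fun z ↦ ENNReal.ofReal (gaussPdf f σ z) := by fun_prop
  rw [lintegral_prod_mul hg.aemeasurable hg.aemeasurable, lintegral_Iic_gaussPdf hσ, sq,
    ENNReal.ofReal_mul (Phi_nonneg _)]

lemma biGaussDensity_nonneg (m₁ m₂ A B : ℝ) (z : ℝ × ℝ) :
    0 ≤ biGaussDensity m₁ m₂ A B z :=
  div_nonneg (exp_pos _).le (by positivity)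

/-- Marginal times posterior: the posterior mean and standard deviation of `y` given `(z₁, z₂)`
come from completing the square in `y`. -/
lemma gaussPdf_mul_gaussPdf_mul_gaussPdf {σ v : ℝ} (hσ : 0 < σ) (hv : 0 < v)
    (m z₁ z₂ y : ℝ) :
    gaussPdf y σ z₁ * gaussPdf y σ z₂ * gaussPdf m v y =
      biGaussDensity m m (σ ^ 2 + v ^ 2) (v ^ 2) (z₁, z₂) *
        gaussPdf (((z₁ + z₂) * v ^ 2 + m * σ ^ 2) / (σ ^ 2 + 2 * v ^ 2))
          (σ * v / √(σ ^ 2 + 2 * v ^ 2)) y := by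
  set w := √(σ ^ 2 + 2 * v ^ 2)
  have hw : 0 < w := by positivity
  have hw2 : w ^ 2 = σ ^ 2 + 2 * v ^ 2 := sq_sqrt (by positivity)
  have hdet : (σ ^ 2 + v ^ 2) ^ 2 - (v ^ 2) ^ 2 = σ ^ 2 * (σ ^ 2 + 2 * v ^ 2) := by ring
  have hsqrt_det : √(σ ^ 2 * (σ ^ 2 + 2 * v ^ 2)) = σ * w := by
    rw [sqrt_mul (sq_nonneg σ), sqrt_sq hσ.le]
  simp only [gaussPdf_of_pos hσ, gaussPdf_of_pos hv,
    gaussPdf_of_pos (by positivity : 0 < σ * v / w),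
    biGaussDensity, hdet, hsqrt_det]
  rw [div_mul_div_comm, div_mul_div_comm, div_mul_div_comm, ← exp_add, ← exp_add, ← exp_add]
  congr 1
  · congr 1
    rw [div_pow, mul_pow, hw2]
    field_simp
    ring
  · field_simp
    exact sq_sqrt (by positivity)

lemma ofReal_biGaussDensity_eq_lintegral {σ v : ℝ} (hσ : 0 < σ) (hv : 0 < v) (m : ℝ)
    (z : ℝ × ℝ) :
    ENNReal.ofReal (biGaussDensity m m (σ ^ 2 + v ^ 2) (v ^ 2) z) =
      ∫⁻ f, ENNReal.ofReal (gaussPdf m v f) *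
        (ENNReal.ofReal (gaussPdf f σ z.1) * ENNReal.ofReal (gaussPdf f σ z.2)) := by
  obtain ⟨z₁, z₂⟩ := z
  simp_rw [← ENNReal.ofReal_mul (gaussPdf_nonneg _ _ _), mul_comm (gaussPdf m v _),
    gaussPdf_mul_gaussPdf_mul_gaussPdf hσ hv,
    ENNReal.ofReal_mul (biGaussDensity_nonneg m m (σ ^ 2 + v ^ 2) (v ^ 2) (z₁, z₂))]
  rw [lintegral_const_mul' _ _ ENNReal.ofReal_ne_top,
    lintegral_ofReal_gaussPdf _ (by positivity), mul_one]

theorem stmt_2 (σ v ε m : ℝ) (hσ : 0 < σ) (hv : 0 < v) :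
    ∫ f : ℝ, Phi ((ε - f) / σ) ^ 2 * gaussPdf m v f
      = (((volume : Measure (ℝ × ℝ)).withDensity
            (fun z => ENNReal.ofReal (biGaussDensity m m (σ ^ 2 + v ^ 2) (v ^ 2) z)))
            {z : ℝ × ℝ | z.1 ≤ ε ∧ z.2 ≤ ε}).toReal := by
  have hquadrant : {z : ℝ × ℝ | z.1 ≤ ε ∧ z.2 ≤ ε} = Iic ε ×ˢ Iic ε := rfl
  rw [integral_eq_lintegral_of_nonneg_ae
      (ae_of_all _ fun f ↦ mul_nonneg (sq_nonneg _) (gaussPdf_nonneg _ _ _)) (by fun_prop),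
    hquadrant, withDensity_apply _ (measurableSet_Iic.prod measurableSet_Iic),
    Measure.volume_eq_prod, ← Measure.prod_restrict]
  congr 1
  simp_rw [ofReal_biGaussDensity_eq_lintegral hσ hv]
  rw [lintegral_lintegral_swap (by fun_prop)]
  refine lintegral_congr fun f ↦ ?_
  rw [lintegral_const_mul' _ _ ENNReal.ofReal_ne_top,
    lintegral_Iic_prod_Iic_gaussPdf_mul_gaussPdf hσ,
    ← ENNReal.ofReal_mul (gaussPdf_nonneg _ _ _), mul_comm]
end

section
/- Let s > 0, τ > 0 and ε, m₀ ∈ ℝ. Then ∫_ℝ [Φ((ε − m)/s) − Φ((ε − m)/s)²] · N(m | m₀, τ²) dm = 2·T((ε − m₀)/√(s² + τ²), s/√(s² + 2τ²)). -/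
/-! Owen's identity `Φ(x) - Φ(x)² = 2 T(x, 1)` (both sides have derivative `-φ(x)(2Φ(x) - 1)`
and agree at `0`) turns the integrand into `π⁻¹ ∫₀¹ exp (-x² (1 + u²) / 2) / (1 + u²) du` with
`x = (ε - m) / s`. After exchanging the two integrals, the `m`-integral is that of a product of
two Gaussians, computed by completing the square, and the substitution
`x = u / √(1 + ρ² (1 + u²))`, `ρ = τ / s`, turns the remaining `u`-integral into the one defining
`T(h, a)`. -/

open MeasureTheory Real

open Set

lemma exp_neg_sq_div_two_eq (t : ℝ) : exp (-t ^ 2 / 2) = exp (-(1 / 2) * t ^ 2) := by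
  ring_nf

lemma integrable_exp_neg_sq_div_two : Integrable fun t : ℝ => exp (-t ^ 2 / 2) := by
  simpa only [exp_neg_sq_div_two_eq] using integrable_exp_neg_mul_sq (b := 1 / 2) (by norm_num)

lemma continuous_exp_neg_sq_div_two : Continuous fun t : ℝ => exp (-t ^ 2 / 2) := by
  fun_prop

lemma integral_Iic_zero_exp_neg_sq_div_two :
    ∫ t in Iic (0 : ℝ), exp (-t ^ 2 / 2) = √(2 * π) / 2 := by
  have h := integral_comp_neg_Ioi 0 fun t : ℝ => exp (-t ^ 2 / 2)
  simp only [neg_sq, neg_zero] at h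
  rw [← h, funext exp_neg_sq_div_two_eq, integral_gaussian_Ioi]
  congr 2
  ring

noncomputable def gaussInt (x : ℝ) : ℝ := ∫ t in (0 : ℝ)..x, exp (-t ^ 2 / 2)

lemma hasDerivAt_gaussInt (x : ℝ) : HasDerivAt gaussInt (exp (-x ^ 2 / 2)) x :=
  intervalIntegral.integral_hasDerivAt_right
    (continuous_exp_neg_sq_div_two.intervalIntegrable _ _)
    (continuous_exp_neg_sq_div_two.stronglyMeasurableAtFilter _ _)
    continuous_exp_neg_sq_div_two.continuousAt

lemma Phi_eq_half_add_gaussInt (x : ℝ) : Phi x = 1 / 2 + gaussInt x / √(2 * π) := by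
  have hsplit := intervalIntegral.integral_Iic_sub_Iic (a := 0) (b := x) (μ := volume)
    integrable_exp_neg_sq_div_two.integrableOn integrable_exp_neg_sq_div_two.integrableOn
  rw [integral_Iic_zero_exp_neg_sq_div_two] at hsplit
  have hpos : 0 < √(2 * π) := by positivity
  rw [Phi, integral_div, gaussInt, ← hsplit]
  field_simp
  ring

lemma mul_integral_exp_neg_mul_sq_eq_gaussInt (h a : ℝ) :
    h * ∫ u in (0 : ℝ)..a, exp (-(h * u) ^ 2 / 2) = gaussInt (h * a) := by
  rw [intervalIntegral.mul_integral_comp_mul_left (f := fun t => exp (-t ^ 2 / 2)), mul_zero,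
    gaussInt]

noncomputable def owenIntegrand (h x : ℝ) : ℝ := exp (-h ^ 2 * (1 + x ^ 2) / 2) / (1 + x ^ 2)

lemma OwenT_eq_integral_owenIntegrand (h a : ℝ) :
    OwenT h a = 1 / (2 * π) * ∫ x in (0 : ℝ)..a, owenIntegrand h x :=
  rfl

lemma continuous_uncurry_owenIntegrand : Continuous (Function.uncurry owenIntegrand) :=
  Continuous.div (by fun_prop) (by fun_prop) fun p => by positivity

lemma continuous_owenIntegrand (h : ℝ) : Continuous (owenIntegrand h) :=
  continuous_uncurry_owenIntegrand.comp (Continuous.prodMk_right h)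

lemma exp_neg_sq_mul_one_add_sq_le_one (h x : ℝ) : exp (-h ^ 2 * (1 + x ^ 2) / 2) ≤ 1 :=
  exp_le_one_iff.2 <| by
    have := mul_nonneg (sq_nonneg h) (by positivity : (0 : ℝ) ≤ 1 + x ^ 2)
    linarith

lemma abs_owenIntegrand_le_one (h x : ℝ) : |owenIntegrand h x| ≤ 1 := by
  have := exp_neg_sq_mul_one_add_sq_le_one h x
  rw [owenIntegrand, abs_of_nonneg (by positivity), div_le_one (by positivity)]
  nlinarith [sq_nonneg x]

lemma hasDerivAt_owenIntegrand (x u : ℝ) :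
    HasDerivAt (fun h => owenIntegrand h u) (-x * exp (-x ^ 2 * (1 + u ^ 2) / 2)) x :=
  ((((hasDerivAt_pow 2 x).fun_neg.mul_const (1 + u ^ 2)).div_const 2).exp.div_const
    (1 + u ^ 2)).congr_deriv (by field_simp; ring)

lemma hasDerivAt_OwenT (x a : ℝ) :
    HasDerivAt (fun h => OwenT h a) (-(exp (-x ^ 2 / 2) * gaussInt (x * a)) / (2 * π)) x := by
  have hbound : ∀ u, ∀ y ∈ Metric.ball x 1,
      ‖-y * exp (-y ^ 2 * (1 + u ^ 2) / 2)‖ ≤ |x| + 1 := by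
    intro u y hy
    have hy' : |y| ≤ |x| + 1 := by
      have := abs_sub_abs_le_abs_sub y x
      rw [Metric.mem_ball, dist_eq] at hy
      linarith
    rw [norm_mul, norm_neg, norm_eq_abs, norm_of_nonneg (exp_pos _).le]
    nlinarith [abs_nonneg y, exp_pos (-y ^ 2 * (1 + u ^ 2) / 2),
      exp_neg_sq_mul_one_add_sq_le_one y u]
  obtain ⟨-, hderiv⟩ := intervalIntegral.hasDerivAt_integral_of_dominated_loc_of_deriv_le
    (μ := volume) (a := 0) (b := a) (bound := fun _ => |x| + 1)
    (Metric.ball_mem_nhds x one_pos)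
    (Filter.Eventually.of_forall fun y => (continuous_owenIntegrand y).aestronglyMeasurable)
    ((continuous_owenIntegrand x).intervalIntegrable _ _)
    (by fun_prop : Continuous fun u : ℝ =>
      -x * exp (-x ^ 2 * (1 + u ^ 2) / 2)).aestronglyMeasurable
    (ae_of_all _ fun u _ => hbound u) intervalIntegrable_const
    (ae_of_all _ fun u _ y _ => hasDerivAt_owenIntegrand y u)
  have hsplit : ∀ u, -x * exp (-x ^ 2 * (1 + u ^ 2) / 2)
      = -exp (-x ^ 2 / 2) * (x * exp (-(x * u) ^ 2 / 2)) := fun u => by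
    rw [show -x ^ 2 * (1 + u ^ 2) / 2 = -x ^ 2 / 2 + -(x * u) ^ 2 / 2 by ring, exp_add]
    ring
  simp_rw [hsplit, intervalIntegral.integral_const_mul,
    mul_integral_exp_neg_mul_sq_eq_gaussInt] at hderiv
  exact (hderiv.const_mul (1 / (2 * π))).congr_deriv (by ring)

lemma OwenT_one_right (h : ℝ) : OwenT h 1 = 1 / 8 - gaussInt h ^ 2 / (4 * π) := by
  have hderiv : ∀ x, HasDerivAt (fun x => OwenT x 1 + gaussInt x ^ 2 / (4 * π)) 0 x := by
    intro x
    refine ((hasDerivAt_OwenT x 1).add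
      (((hasDerivAt_gaussInt x).pow 2).div_const (4 * π))).congr_deriv ?_
    field_simp
    ring
  have hconst := is_const_of_deriv_eq_zero (fun x => (hderiv x).differentiableAt)
    (fun x => (hderiv x).deriv) h 0
  have hzero : OwenT 0 1 = 1 / 8 := by
    norm_num [OwenT, integral_one_div_one_add_sq]
    field_simp
    ring
  have hgauss : gaussInt 0 = 0 := intervalIntegral.integral_same
  rw [hzero, hgauss] at hconst
  linear_combination hconst

lemma Phi_sub_sq_eq_two_mul_OwenT_one (x : ℝ) : Phi x - Phi x ^ 2 = 2 * OwenT x 1 := by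
  have hsq : (gaussInt x / √(2 * π)) ^ 2 = gaussInt x ^ 2 / (2 * π) := by
    rw [div_pow, sq_sqrt (by positivity)]
  rw [Phi_eq_half_add_gaussInt, OwenT_one_right]
  linear_combination -hsq

lemma integral_gaussian_sub_mul_gaussian_sub (a b μ ν : ℝ) (hab : 0 < a + b) :
    ∫ m : ℝ, exp (-a * (m - μ) ^ 2) * exp (-b * (m - ν) ^ 2)
      = √(π / (a + b)) * exp (-(a * b / (a + b)) * (μ - ν) ^ 2) := by
  have hcompl : ∀ m : ℝ, exp (-a * (m - μ) ^ 2) * exp (-b * (m - ν) ^ 2)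
      = exp (-(a + b) * (m - (a * μ + b * ν) / (a + b)) ^ 2)
        * exp (-(a * b / (a + b)) * (μ - ν) ^ 2) := fun m => by
    rw [← exp_add, ← exp_add]
    congr 1
    field_simp
    ring
  simp_rw [hcompl]
  rw [integral_mul_const, integral_sub_right_eq_self (fun m => exp (-(a + b) * m ^ 2)),
    integral_gaussian]

lemma integral_exp_neg_mul_sq_sub_mul_gaussPdf (a c m₀ τ : ℝ) (hτ : τ ≠ 0)
    (ha : 0 < 1 + 2 * a * τ ^ 2) :
    ∫ m : ℝ, exp (-a * (m - c) ^ 2) * gaussPdf m₀ τ m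
      = exp (-(a / (1 + 2 * a * τ ^ 2)) * (c - m₀) ^ 2) / √(1 + 2 * a * τ ^ 2) := by
  have hb : 0 < a + 1 / (2 * τ ^ 2) := by
    have : a + 1 / (2 * τ ^ 2) = (1 + 2 * a * τ ^ 2) / (2 * τ ^ 2) := by field_simp; ring
    rw [this]; positivity
  have hpdf : ∀ m,
      gaussPdf m₀ τ m = exp (-(1 / (2 * τ ^ 2)) * (m - m₀) ^ 2) / √(2 * π * τ ^ 2) := fun m => by rw [gaussPdf]; congr 2; ring
  simp_rw [hpdf, ← mul_div_assoc]
  rw [integral_div, integral_gaussian_sub_mul_gaussian_sub _ _ _ _ hb,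
    show π / (a + 1 / (2 * τ ^ 2)) = 2 * π * τ ^ 2 / (1 + 2 * a * τ ^ 2) by field_simp; ring,
    sqrt_div (by positivity)]
  have hsqrt : 0 < √(2 * π * τ ^ 2) := by positivity
  field_simp
  congr 2
  field_simp
  ring

lemma integral_integral_mul_swap {α β : Type*} [MeasurableSpace α] [MeasurableSpace β]
    {μ : Measure α} {ν : Measure β} [SFinite μ] [IsFiniteMeasure ν] {F : α → β → ℝ}
    {g : α → ℝ} {C : ℝ} (hF : AEStronglyMeasurable (Function.uncurry F) (μ.prod ν))
    (hFC : ∀ x y, |F x y| ≤ C) (hg : Integrable g μ) :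
    ∫ x, (∫ y, F x y ∂ν) * g x ∂μ = ∫ y, ∫ x, F x y * g x ∂μ ∂ν := by
  have hint : Integrable (Function.uncurry fun x y => F x y * g x) (μ.prod ν) := by
    refine Integrable.mono' ((hg.norm.comp_fst ν).const_mul C) (hF.mul hg.1.comp_fst) ?_
    refine ae_of_all _ fun p => ?_
    simp only [Function.uncurry, norm_mul, norm_eq_abs]
    exact mul_le_mul_of_nonneg_right (hFC _ _) (abs_nonneg _)
  simp_rw [← integral_mul_const]
  exact integral_integral_swap hint

lemma hasDerivAt_div_sqrt_one_add_sq_mul (ρ u : ℝ) :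
    HasDerivAt (fun u => u / √(1 + ρ ^ 2 * (1 + u ^ 2)))
      ((1 + ρ ^ 2) / ((1 + ρ ^ 2 * (1 + u ^ 2)) * √(1 + ρ ^ 2 * (1 + u ^ 2)))) u := by
  have hp : 0 < 1 + ρ ^ 2 * (1 + u ^ 2) := by positivity
  have hsqrt := (((hasDerivAt_pow 2 u).const_add 1).const_mul (ρ ^ 2)).const_add 1 |>.sqrt hp.ne'
  refine ((hasDerivAt_id u).div hsqrt (by positivity)).congr_deriv ?_
  have hsq := sq_sqrt hp.le
  simp only [id]
  field_simp
  rw [hsq]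
  ring

lemma one_add_sq_div_sqrt_one_add_sq_mul (ρ u : ℝ) :
    1 + (u / √(1 + ρ ^ 2 * (1 + u ^ 2))) ^ 2
      = (1 + ρ ^ 2) * (1 + u ^ 2) / (1 + ρ ^ 2 * (1 + u ^ 2)) := by
  have hp : 0 < 1 + ρ ^ 2 * (1 + u ^ 2) := by positivity
  rw [div_pow, sq_sqrt hp.le]
  field_simp
  ring

lemma integral_owenIntegrand_eq_integral_subst (h ρ : ℝ) :
    ∫ x in (0 : ℝ)..1 / √(1 + 2 * ρ ^ 2), owenIntegrand h x
      = ∫ u in (0 : ℝ)..1,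
          exp (-h ^ 2 * ((1 + ρ ^ 2) * (1 + u ^ 2) / (1 + ρ ^ 2 * (1 + u ^ 2))) / 2)
            / ((1 + u ^ 2) * √(1 + ρ ^ 2 * (1 + u ^ 2))) := by
  have hsubst := intervalIntegral.integral_comp_mul_deriv (a := 0) (b := 1)
    (fun u _ => hasDerivAt_div_sqrt_one_add_sq_mul ρ u) ?_ (continuous_owenIntegrand h)
  · have hf1 : (1 : ℝ) / √(1 + ρ ^ 2 * (1 + 1 ^ 2)) = 1 / √(1 + 2 * ρ ^ 2) := by ring_nf
    simp only [Function.comp_def, zero_div, hf1] at hsubst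
    rw [← hsubst]
    refine intervalIntegral.integral_congr fun u _ => ?_
    have hp : 0 < 1 + ρ ^ 2 * (1 + u ^ 2) := by positivity
    simp only [owenIntegrand, one_add_sq_div_sqrt_one_add_sq_mul]
    field_simp
  · exact (Continuous.div (by fun_prop) (by fun_prop) fun u => by positivity).continuousOn

lemma integrable_gaussPdf (m₀ : ℝ) {τ : ℝ} (hτ : τ ≠ 0) :
    Integrable (gaussPdf m₀ τ) := by
  refine (((integrable_exp_neg_mul_sq (b := 1 / (2 * τ ^ 2)) (by positivity)).comp_sub_right
    m₀).div_const √(2 * π * τ ^ 2)).congr (ae_of_all _ fun m => ?_)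
  simp only [gaussPdf]
  congr 2
  ring

lemma integral_owenIntegrand_mul_gaussPdf (c m₀ u : ℝ) {s τ : ℝ} (hs : s ≠ 0)
    (hτ : τ ≠ 0) :
    ∫ m : ℝ, owenIntegrand ((c - m) / s) u * gaussPdf m₀ τ m
      = exp (-((c - m₀) / s) ^ 2 * ((1 + u ^ 2) / (1 + (τ / s) ^ 2 * (1 + u ^ 2))) / 2)
          / ((1 + u ^ 2) * √(1 + (τ / s) ^ 2 * (1 + u ^ 2))) := by
  have hexp : ∀ m, exp (-((c - m) / s) ^ 2 * (1 + u ^ 2) / 2)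
      = exp (-((1 + u ^ 2) / (2 * s ^ 2)) * (m - c) ^ 2) := fun m => by
    congr 1; field_simp; ring
  have hp : 1 + 2 * ((1 + u ^ 2) / (2 * s ^ 2)) * τ ^ 2 = 1 + (τ / s) ^ 2 * (1 + u ^ 2) := by
    field_simp
  simp_rw [owenIntegrand, hexp, div_mul_eq_mul_div]
  rw [integral_div, integral_exp_neg_mul_sq_sub_mul_gaussPdf _ _ _ _ hτ (by rw [hp]; positivity),
    hp, div_div, mul_comm √_]
  congr 2
  field_simp

theorem stmt_4 (s τ ε m₀ : ℝ) (hs : 0 < s) (hτ : 0 < τ) :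
    ∫ m : ℝ, (Phi ((ε - m) / s) - Phi ((ε - m) / s) ^ 2) * gaussPdf m₀ τ m
      = 2 * OwenT ((ε - m₀) / Real.sqrt (s ^ 2 + τ ^ 2))
          (s / Real.sqrt (s ^ 2 + 2 * τ ^ 2)) := by
  set ρ := τ / s with hρ
  set h := (ε - m₀) / √(s ^ 2 + τ ^ 2) with hh
  have ha : s / √(s ^ 2 + 2 * τ ^ 2) = 1 / √(1 + 2 * ρ ^ 2) := by
    rw [show 1 + 2 * ρ ^ 2 = (s ^ 2 + 2 * τ ^ 2) / s ^ 2 by rw [hρ]; field_simp,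
      sqrt_div (by positivity), sqrt_sq hs.le, one_div_div]
  have h_sq_mul : h ^ 2 * (1 + ρ ^ 2) = ((ε - m₀) / s) ^ 2 := by
    rw [hh, hρ, div_pow, sq_sqrt (by positivity)]
    field_simp
  have hF : Continuous fun p : ℝ × ℝ => owenIntegrand ((ε - p.1) / s) p.2 :=
    continuous_uncurry_owenIntegrand.comp (f := fun p : ℝ × ℝ => ((ε - p.1) / s, p.2))
      (by fun_prop)
  calc _ = (∫ m, (∫ u in Ioc (0 : ℝ) 1, owenIntegrand ((ε - m) / s) u)
          * gaussPdf m₀ τ m) / π := by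
        rw [← integral_div]
        congr with m
        rw [Phi_sub_sq_eq_two_mul_OwenT_one, OwenT_eq_integral_owenIntegrand,
          intervalIntegral.integral_of_le zero_le_one]
        field_simp
    _ = (∫ u in (0 : ℝ)..1,
          exp (-h ^ 2 * ((1 + ρ ^ 2) * (1 + u ^ 2) / (1 + ρ ^ 2 * (1 + u ^ 2))) / 2)
            / ((1 + u ^ 2) * √(1 + ρ ^ 2 * (1 + u ^ 2)))) / π := by
        rw [integral_integral_mul_swap (ν := volume.restrict (Ioc 0 1))
          (F := fun m u => owenIntegrand ((ε - m) / s) u) hF.aestronglyMeasurable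
          (fun m u => abs_owenIntegrand_le_one _ u) (integrable_gaussPdf m₀ hτ.ne'),
          intervalIntegral.integral_of_le zero_le_one]
        congr 1
        refine setIntegral_congr_fun measurableSet_Ioc fun u _ => ?_
        rw [integral_owenIntegrand_mul_gaussPdf ε m₀ u hs.ne' hτ.ne', ← h_sq_mul]
        congr 3
        ring
    _ = _ := by
        rw [ha, OwenT_eq_integral_owenIntegrand, integral_owenIntegrand_eq_integral_subst]
        ring
end

section
/- Let σ > 0, v > 0, ε, m ∈ ℝ and p > 0, and let f be a random variable distributed according to the Gaussian measure with mean m and variance v². Then for every q ∈ ℝ, P(p·Φ((ε − f)/σ) ≤ p·Φ((v·q − m + ε)/σ)) = Φ(q). In particular, taking q = 0, the value p·Φ((ε − m)/σ) is a median of the random variable p·Φ((ε − f)/σ). -/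
/-! The standardisation `x ↦ (x - m) / v` pushes `N(m, v²)` forward to `N(0, 1)`, whose
distribution function is `Phi`. As `p * Phi (· / σ)` is strictly increasing, the event is the
half-line `[m - v q, ∞)`, which standardising with `-v` in place of `v` turns into `(-∞, q]`.
The median claims are the case `q = 0`, where `Phi 0 = 1 / 2` by the symmetry of `N(0, 1)`. -/

open MeasureTheory Real

open ProbabilityTheory

lemma Phi_eq_gaussianReal (x : ℝ) : Phi x = (gaussianReal 0 1).real (Set.Iic x) := by
  rw [measureReal_def, gaussianReal_apply_eq_integral 0 one_ne_zero,
    ENNReal.toReal_ofReal (integral_nonneg (gaussianPDFReal_nonneg 0 1)), Phi]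
  refine setIntegral_congr_fun measurableSet_Iic fun t _ => ?_
  simp [gaussianPDFReal, div_eq_inv_mul]

lemma Phi_strictMono : StrictMono Phi := by
  intro x y hxy
  have hIoc : 0 < (gaussianReal 0 1).real (Set.Ioc x y) := by
    refine ENNReal.toReal_pos (fun h => ?_) (measure_ne_top _ _)
    have := gaussianReal_absolutelyContinuous' 0 one_ne_zero h
    simp only [Real.volume_Ioc, ENNReal.ofReal_eq_zero, tsub_nonpos] at this
    linarith
  rw [Phi_eq_gaussianReal, Phi_eq_gaussianReal, ← Set.Iic_union_Ioc_eq_Iic hxy.le,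
    measureReal_union (Set.Iic_disjoint_Ioc le_rfl) measurableSet_Ioc]
  linarith

lemma Phi_le_Phi {x y : ℝ} : Phi x ≤ Phi y ↔ x ≤ y :=
  Phi_strictMono.le_iff_le

lemma Phi_zero : Phi 0 = 1 / 2 := by
  have : NullSingletonClass (gaussianReal 0 1) := nullSingletonClass_gaussianReal one_ne_zero
  have hsymm : (gaussianReal 0 1).real (Set.Ici 0) = (gaussianReal 0 1).real (Set.Iic 0) := by
    have hneg := gaussianReal_map_neg (μ := 0) (v := 1)
    rw [neg_zero] at hneg
    nth_rw 1 [← hneg]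
    rw [map_measureReal_apply measurable_neg measurableSet_Ici, Set.neg_preimage,
      Set.neg_Ici, neg_zero]
  have hsum := measureReal_union_add_inter (μ := gaussianReal 0 1) (s := Set.Iic 0)
    (measurableSet_Ici (a := 0))
  rw [Set.Iic_union_Ici, Set.Iic_inter_Ici, Set.Icc_self, probReal_univ,
    measureReal_def, measure_singleton, ENNReal.toReal_zero, add_zero, hsymm] at hsum
  rw [Phi_eq_gaussianReal]
  linarith

lemma gaussianReal_map_standardize (m : ℝ) {v : ℝ} (hv : v ≠ 0) :
    (gaussianReal m (v ^ 2).toNNReal).map (fun x => (x - m) / v) = gaussianReal 0 1 := by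
  rw [show (fun x => (x - m) / v) = (· / v) ∘ (· - m) from rfl,
    ← Measure.map_map (by fun_prop) (by fun_prop), gaussianReal_map_sub_const,
    gaussianReal_map_div_const, sub_self, zero_div]
  congr 1
  ext
  simp only [Real.coe_toNNReal', NNReal.coe_div, NNReal.coe_mk, NNReal.coe_one]
  rw [max_eq_left (sq_nonneg v), div_self (pow_ne_zero 2 hv)]

lemma gaussianReal_real_preimage_standardize (m : ℝ) {v : ℝ} (hv : v ≠ 0) {s : Set ℝ}
    (hs : MeasurableSet s) :
    (gaussianReal m (v ^ 2).toNNReal).real ((fun x => (x - m) / v) ⁻¹' s) =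
      (gaussianReal 0 1).real s := by
  rw [← map_measureReal_apply (by fun_prop) hs, gaussianReal_map_standardize m hv]

lemma gaussianReal_real_Iic_add_mul (m q : ℝ) {v : ℝ} (hv : 0 < v) :
    (gaussianReal m (v ^ 2).toNNReal).real (Set.Iic (m + v * q)) = Phi q := by
  have hpre : Set.Iic (m + v * q) = (fun x => (x - m) / v) ⁻¹' Set.Iic q := by
    ext x
    simp only [Set.mem_Iic, Set.mem_preimage, div_le_iff₀ hv]
    constructor <;> intro h <;> linarith
  rw [hpre, gaussianReal_real_preimage_standardize m hv.ne' measurableSet_Iic,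
    Phi_eq_gaussianReal]

lemma gaussianReal_real_Ici_sub_mul (m q : ℝ) {v : ℝ} (hv : 0 < v) :
    (gaussianReal m (v ^ 2).toNNReal).real (Set.Ici (m - v * q)) = Phi q := by
  have hpre : Set.Ici (m - v * q) = (fun x => (x - m) / -v) ⁻¹' Set.Iic q := by
    ext x
    simp only [Set.mem_Ici, Set.mem_preimage, Set.mem_Iic, div_neg, neg_le, le_div_iff₀ hv]
    constructor <;> intro h <;> linarith
  rw [hpre, ← neg_sq, gaussianReal_real_preimage_standardize m (neg_ne_zero.2 hv.ne')
    measurableSet_Iic, Phi_eq_gaussianReal]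

lemma mul_Phi_div_le_mul_Phi_div_iff {σ p a b : ℝ} (hσ : 0 < σ) (hp : 0 < p) :
    p * Phi (a / σ) ≤ p * Phi (b / σ) ↔ a ≤ b := by
  rw [mul_le_mul_iff_right₀ hp, Phi_le_Phi, div_le_div_iff_of_pos_right hσ]

lemma setOf_mul_Phi_sub_div_le {σ p : ℝ} (hσ : 0 < σ) (hp : 0 < p) (ε b : ℝ) :
    {f : ℝ | p * Phi ((ε - f) / σ) ≤ p * Phi (b / σ)} = Set.Ici (ε - b) := by
  ext f
  simp only [Set.mem_ofPred_eq, Set.mem_Ici, mul_Phi_div_le_mul_Phi_div_iff hσ hp, sub_le_comm]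

lemma setOf_le_mul_Phi_sub_div {σ p : ℝ} (hσ : 0 < σ) (hp : 0 < p) (ε b : ℝ) :
    {f : ℝ | p * Phi (b / σ) ≤ p * Phi ((ε - f) / σ)} = Set.Iic (ε - b) := by
  ext f
  simp only [Set.mem_ofPred_eq, Set.mem_Iic, mul_Phi_div_le_mul_Phi_div_iff hσ hp, le_sub_comm]

theorem stmt_12 (σ v ε m p : ℝ) (hσ : 0 < σ) (hv : 0 < v) (hp : 0 < p) :
    (∀ q : ℝ,
      ((gaussianReal m (v ^ 2).toNNReal)
          {f : ℝ | p * Phi ((ε - f) / σ) ≤ p * Phi ((v * q - m + ε) / σ)}).toReal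
        = Phi q) ∧
    (1 / 2 ≤ ((gaussianReal m (v ^ 2).toNNReal)
        {f : ℝ | p * Phi ((ε - f) / σ) ≤ p * Phi ((ε - m) / σ)}).toReal ∧
      1 / 2 ≤ ((gaussianReal m (v ^ 2).toNNReal)
        {f : ℝ | p * Phi ((ε - m) / σ) ≤ p * Phi ((ε - f) / σ)}).toReal) := by
  simp only [← measureReal_def, setOf_mul_Phi_sub_div_le hσ hp,
    setOf_le_mul_Phi_sub_div hσ hp, sub_sub_cancel]
  refine ⟨fun q => ?_, ?_, ?_⟩
  · rw [show ε - (v * q - m + ε) = m - v * q by ring]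
    exact gaussianReal_real_Ici_sub_mul m q hv
  · simpa [Phi_zero] using (gaussianReal_real_Ici_sub_mul m 0 hv).ge
  · simpa [Phi_zero] using (gaussianReal_real_Iic_add_mul m 0 hv).ge
end
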